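/- arXiv:1405.6928 — 6 statements merged into one kernel-verified Lean document; each statement's English description precedes it below -/
import Mathlib

section
/- Let P be a convex polytope that k-tiles ℝ^d with a discrete multiset Λ. If every element of Λ is contained in a lattice L, then there exists a positive integer m such that P m-tiles ℝ^d with L (each point of L taken with multiplicity one). -/
open Set Pointwise

noncomputable section

abbrev Euc (d : ℕ) : Type := EuclideanSpace ℝ (Fin d)

/-- A "discrete multiset" of vectors: a multiplicity function with locally finite support. -/
def IsDiscreteMultiset {d : ℕ} (m : Euc d → ℕ) : Prop :=
  ∀ x : Euc d, ∃ U ∈ nhds x, {y : Euc d | y ∈ U ∧ m y ≠ 0}.Finite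

/-- `∑_{λ∈Λ} 1_{P+λ}(v)`, counted with multiplicity. -/
def coverCount {d : ℕ} (m : Euc d → ℕ) (P : Set (Euc d)) (v : Euc d) : ℕ :=
  ∑ᶠ l : Euc d, m l * P.indicator 1 (v - l)

/-- The set `∂P + Λ`. -/
def boundarySum {d : ℕ} (P : Set (Euc d)) (m : Euc d → ℕ) : Set (Euc d) :=
  {x : Euc d | ∃ l : Euc d, m l ≠ 0 ∧ x - l ∈ frontier P}

/-- `P` `k`-tiles `ℝ^d` with the discrete multiset `m`: every point not in `∂P + Λ`
is covered exactly `k` times. -/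
def Tiles {d : ℕ} (P : Set (Euc d)) (m : Euc d → ℕ) (k : ℕ) : Prop :=
  ∀ v : Euc d, v ∉ boundarySum P m → coverCount m P v = k

/-- A lattice in ℝ^d: a discrete additive subgroup of full rank, viewed as a set. -/
def IsLattice {d : ℕ} (L : Set (Euc d)) : Prop :=
  ∃ H : AddSubgroup (Euc d), L = (H : Set (Euc d)) ∧
    DiscreteTopology H ∧ Submodule.span ℝ (H : Set (Euc d)) = ⊤

/-- A set viewed as a multiset with all multiplicities one. -/
def setMult {d : ℕ} (L : Set (Euc d)) : Euc d → ℕ := L.indicator 1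

/-- A convex polytope: convex hull of a finite set of points, with nonempty interior. -/
def IsConvexPolytope {d : ℕ} (P : Set (Euc d)) : Prop :=
  (∃ S : Set (Euc d), S.Finite ∧ P = convexHull ℝ S) ∧ (interior P).Nonempty

/-- The half-open counterpart `P^h` of `P` with respect to the direction `h`. -/
def halfOpen {d : ℕ} (P : Set (Euc d)) (h : Euc d) : Set (Euc d) :=
  {v : Euc d | v ∈ closure P ∧
    ∃ ε : ℝ, 0 < ε ∧ ∀ c : ℝ, 0 < c → c < ε → v + c • h ∈ interior P}

/-- Every line with direction `h` meets `∂P` in finitely many points. -/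
def GoodDirection {d : ℕ} (P : Set (Euc d)) (h : Euc d) : Prop :=
  ∀ x : Euc d, {c : ℝ | x + c • h ∈ frontier P}.Finite

/-- `P^h` `k`-tiles `ℝ^d` with the discrete multiset `m`. -/
def TilesHalfOpen {d : ℕ} (P : Set (Euc d)) (h : Euc d) (m : Euc d → ℕ) (k : ℕ) : Prop :=
  ∀ v : Euc d, v ∉ boundarySum P m → coverCount m (halfOpen P h) v = k

/-- `L_Λ(v) = #(Λ ∩ (−1·P + v))`, counted with multiplicity. -/
def LEnum {d : ℕ} (m : Euc d → ℕ) (P : Set (Euc d)) (v : Euc d) : ℕ :=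
  ∑ᶠ l : Euc d, m l * Set.indicator (v +ᵥ ((-1 : ℝ) • P)) 1 l

/-- `L^h_Λ(v) = #(Λ ∩ (−1·P^h + v))`, counted with multiplicity. -/
def LEnumH {d : ℕ} (m : Euc d → ℕ) (P : Set (Euc d)) (h : Euc d) (v : Euc d) : ℕ :=
  LEnum m (halfOpen P h) v

/-! Fix two points `v`, `w` off `∂P + L` and count the pairs `(l, x)` with `l ∈ L`, `v - l ∈ P`
and `w + l - x ∈ P`, weighting `x` by `Λ`. Summing over `x` first, every `w + l` lies off
`∂P + Λ`, so the count is `k · #{l ∈ L | v - l ∈ P}`. The substitution `l ↦ x - l`, legitimate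
because `x ∈ L`, exchanges the roles of `v` and `w`; hence the `L`-covering number is the same at
`v` and `w`. Points off `∂P + L` exist because `L` is countable and `∂P` is null. -/

section DoubleCounting

variable {G : Type*} [AddCommGroup G] (L : AddSubgroup G) (P : Set G) (Λ : G → ℕ)

def crossCount (v w : G) : ℕ :=
  ∑ᶠ p : G × G, (L : Set G).indicator 1 p.1 * P.indicator 1 (v - p.1) *
    (Λ p.2 * P.indicator 1 (w + p.1 - p.2))

variable {L P Λ}

theorem crossCount_comm (hΛ : ∀ x, Λ x ≠ 0 → x ∈ L) (v w : G) :
    crossCount L P Λ v w = crossCount L P Λ w v := by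
  let e : G × G ≃ G × G :=
    { toFun := fun p => (p.2 - p.1, p.2)
      invFun := fun p => (p.2 - p.1, p.2)
      left_inv := fun p => by simp
      right_inv := fun p => by simp }
  rw [crossCount, ← finsum_comp_equiv e]
  refine finsum_congr fun ⟨l, x⟩ => ?_
  show (L : Set G).indicator 1 (x - l) * P.indicator 1 (v - (x - l)) *
    (Λ x * P.indicator 1 (w + (x - l) - x)) = _
  by_cases hx : Λ x = 0
  · simp [hx]
  · have hmem : x - l ∈ L ↔ l ∈ L := by
      rw [sub_eq_add_neg, L.add_mem_cancel_left (hΛ x hx), L.neg_mem_iff]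
    have hL : (L : Set G).indicator (1 : G → ℕ) (x - l) = (L : Set G).indicator 1 l := by
      by_cases hl : l ∈ L <;> simp [hl, hmem]
    rw [hL, show v - (x - l) = v + l - x by abel, show w + (x - l) - x = w - l by abel]
    ring

theorem crossCount_eq_mul {k : ℕ} (hΛ : ∀ x, Λ x ≠ 0 → x ∈ L)
    (hfin : ∀ u, {l | l ∈ L ∧ u - l ∈ P}.Finite) {v w : G}
    (hw : ∀ l ∈ L, ∑ᶠ x, Λ x * P.indicator 1 (w + l - x) = k) :
    crossCount L P Λ v w = k * ∑ᶠ l, (L : Set G).indicator 1 l * P.indicator 1 (v - l) := by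
  have hsupp : Function.HasFiniteSupport fun p : G × G =>
      (L : Set G).indicator 1 p.1 * P.indicator 1 (v - p.1) *
        (Λ p.2 * P.indicator 1 (w + p.1 - p.2)) := by
    refine ((hfin v).biUnion fun l _ => (finite_singleton l).prod (hfin (w + l))).subset ?_
    rintro ⟨l, x⟩ hp
    simp only [Function.mem_support, ne_eq, mul_eq_zero, not_or, Set.indicator_apply_eq_zero,
      Pi.one_apply, one_ne_zero, imp_false, not_not] at hp
    obtain ⟨⟨hl, hvl⟩, hx, hwx⟩ := hp
    exact mem_biUnion ⟨hl, hvl⟩ ⟨rfl, hΛ x hx, hwx⟩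
  rw [crossCount, finsum_curry _ hsupp, mul_comm k, finsum_mul]
  refine finsum_congr fun l => ?_
  dsimp only
  rw [← mul_finsum]
  by_cases hl : l ∈ L
  · rw [hw l hl]
  · simp [hl]

theorem mul_finsum_indicator_eq {k : ℕ} (hΛ : ∀ x, Λ x ≠ 0 → x ∈ L)
    (hfin : ∀ u, {l | l ∈ L ∧ u - l ∈ P}.Finite) {v w : G}
    (hv : ∀ l ∈ L, ∑ᶠ x, Λ x * P.indicator 1 (v + l - x) = k)
    (hw : ∀ l ∈ L, ∑ᶠ x, Λ x * P.indicator 1 (w + l - x) = k) :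
    k * ∑ᶠ l, (L : Set G).indicator 1 l * P.indicator 1 (v - l) =
      k * ∑ᶠ l, (L : Set G).indicator 1 l * P.indicator 1 (w - l) := by
  rw [← crossCount_eq_mul hΛ hfin hw, crossCount_comm hΛ, crossCount_eq_mul hΛ hfin hv]

end DoubleCounting

theorem finite_setOf_mem_and_sub_mem {E : Type*} [NormedAddCommGroup E] [ProperSpace E]
    {H : AddSubgroup E} [DiscreteTopology H] {P : Set E} (hP : Bornology.IsBounded P) (u : E) :
    {l | l ∈ H ∧ u - l ∈ P}.Finite := by
  obtain ⟨r, hr⟩ := hP.subset_closedBall 0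
  refine (Metric.finite_isBounded_inter_isClosed (K := Metric.closedBall u r) (s := H)
    DiscreteTopology.isDiscrete Metric.isBounded_closedBall
    AddSubgroup.isClosed_of_discrete).subset ?_
  rintro l ⟨hl, hul⟩
  refine ⟨?_, hl⟩
  simpa [dist_comm u, dist_eq_norm, ← norm_neg (l - u)] using hr hul

theorem AddSubgroup.countable_of_discrete {E : Type*} [AddGroup E] [TopologicalSpace E]
    [SecondCountableTopology E] (H : AddSubgroup E) [DiscreteTopology H] :
    (H : Set E).Countable :=
  Set.countable_coe_iff.mp (TopologicalSpace.separableSpace_iff_countable.mp inferInstance)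

theorem volume_boundarySum_eq_zero {d : ℕ} {P : Set (Euc d)} (hP : Convex ℝ P) {m : Euc d → ℕ}
    (hm : (Function.support m).Countable) : MeasureTheory.volume (boundarySum P m) = 0 := by
  have hunion : boundarySum P m = ⋃ l ∈ Function.support m, (· + -l) ⁻¹' frontier P := by
    ext x
    simp [boundarySum, sub_eq_add_neg]
  rw [hunion, MeasureTheory.measure_biUnion_null_iff hm]
  intro l _
  rw [MeasureTheory.measure_preimage_add_right]
  exact hP.addHaar_frontier _

theorem exists_notMem_boundarySum {d : ℕ} {P : Set (Euc d)} (hP : Convex ℝ P) {m : Euc d → ℕ}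
    (hm : (Function.support m).Countable) : ∃ v, v ∉ boundarySum P m :=
  (MeasureTheory.measure_eq_zero_iff_ae_notMem.mp (volume_boundarySum_eq_zero hP hm)).exists

theorem add_notMem_boundarySum {d : ℕ} {P : Set (Euc d)} {H : AddSubgroup (Euc d)}
    {Λ : Euc d → ℕ} (hΛ : ∀ x, Λ x ≠ 0 → x ∈ H) {v l : Euc d}
    (hv : v ∉ boundarySum P (setMult H)) (hl : l ∈ H) : v + l ∉ boundarySum P Λ := by
  rintro ⟨x, hx, hvx⟩
  refine hv ⟨x - l, ?_, ?_⟩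
  · simp [setMult, H.sub_mem (hΛ x hx) hl]
  · rwa [sub_sub_eq_add_sub]

theorem coverCount_setMult_pos {d : ℕ} {P : Set (Euc d)} {L : Set (Euc d)} {Λ : Euc d → ℕ}
    (hΛ : ∀ x, Λ x ≠ 0 → x ∈ L) {v : Euc d} (hfin : {l | l ∈ L ∧ v - l ∈ P}.Finite)
    (h : 0 < coverCount Λ P v) : 0 < coverCount (setMult L) P v := by
  obtain ⟨x, hx⟩ : ∃ x, Λ x * P.indicator 1 (v - x) ≠ 0 := by
    by_contra! h0
    exact h.ne' (finsum_eq_zero_of_forall_eq_zero h0)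
  have hvx : v - x ∈ P := by
    by_contra hvx
    simp [hvx] at hx
  have hxL : x ∈ L := hΛ x (left_ne_zero_of_mul hx)
  refine lt_of_lt_of_le ?_ (single_le_finsum x (hfin.subset ?_) fun _ => Nat.zero_le _)
  · simp [setMult, hxL, hvx]
  · intro l hl
    by_contra hl'
    simp_all [setMult]

theorem stmt_1_general {d : ℕ} (P : Set (Euc d)) (hP : IsConvexPolytope P)
    (k : ℕ) (hk : 0 < k) (Λ : Euc d → ℕ)
    (hTile : Tiles P Λ k) (L : Set (Euc d)) (hL : IsLattice L)
    (hsub : ∀ x : Euc d, Λ x ≠ 0 → x ∈ L) :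
    ∃ m : ℕ, 0 < m ∧ Tiles P (setMult L) m := by
  obtain ⟨H, rfl, hH, -⟩ := hL
  obtain ⟨⟨S, hS, rfl⟩, -⟩ := hP
  have hfin : ∀ u, {l | l ∈ H ∧ u - l ∈ convexHull ℝ S}.Finite :=
    finite_setOf_mem_and_sub_mem (hS.isCompact_convexHull ℝ).isBounded
  have hgood : ∀ v ∉ boundarySum (convexHull ℝ S) (setMult H), ∀ l ∈ H,
      coverCount Λ (convexHull ℝ S) (v + l) = k :=
    fun v hv l hl => hTile _ (add_notMem_boundarySum hsub hv hl)
  obtain ⟨v₀, hv₀⟩ := exists_notMem_boundarySum (m := setMult H) (convex_convexHull ℝ S)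
    (H.countable_of_discrete.mono Set.support_indicator_subset)
  have hk₀ : 0 < coverCount Λ (convexHull ℝ S) v₀ := by
    rwa [← add_zero v₀, hgood v₀ hv₀ 0 H.zero_mem]
  refine ⟨_, coverCount_setMult_pos hsub (hfin v₀) hk₀, fun w hw => ?_⟩
  exact Nat.eq_of_mul_eq_mul_left hk
    (mul_finsum_indicator_eq hsub hfin (hgood w hw) (hgood v₀ hv₀))

/-- If a convex polytope `P` `k`-tiles ℝ^d with a discrete multiset Λ
all of whose elements lie in a lattice `L`, then `P` `m`-tiles ℝ^d with `L`
(each point with multiplicity one) for some positive integer `m`. -/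
theorem stmt_1 {d : ℕ} (P : Set (Euc d)) (hP : IsConvexPolytope P)
    (k : ℕ) (hk : 0 < k) (Λ : Euc d → ℕ) (hΛ : IsDiscreteMultiset Λ)
    (hTile : Tiles P Λ k) (L : Set (Euc d)) (hL : IsLattice L)
    (hsub : ∀ x : Euc d, Λ x ≠ 0 → x ∈ L) :
    ∃ m : ℕ, 0 < m ∧ Tiles P (setMult L) m :=
  stmt_1_general P hP k hk Λ hTile L hL hsub
end
end

section
/- Let P be a d-dimensional convex polytope, let h ∈ ℝ^d be a fixed vector such that every line with direction vector h meets ∂P in finitely many points, and let P^h be the half-open counterpart of P. If P^h k-tiles ℝ^d with a discrete multiset Λ, then ∑_{λ∈Λ} 1_{P^h+λ}(v) = k for all v ∈ ℝ^d (with no exceptional set). -/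
open Set Pointwise

noncomputable section

/-!
Moving `v` a little in the direction `h` does not change which translates `P^h + λ` contain it.
Since `P` is bounded and `Λ` is discrete, only finitely many `λ` matter; for each of them the line
`v - λ + t h` meets `∂P` in finitely many points, so for all small `t > 0` the point `v - λ + t h`
stays off `∂P`, hence (by connectedness) either always in `Int(P)` — then `v - λ ∈ P^h` — or always
outside the closure of `P` — then `v - λ ∉ P^h`. Any such small `t` moves `v` off `∂P + Λ`, where the
tiling hypothesis applies.
-/

open Filter Topology

lemma IsPreconnected.subset_interior_or_subset_compl_closure {X : Type*} [TopologicalSpace X]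
    {s P : Set X} (hs : IsPreconnected s) (hsP : Disjoint s (frontier P)) :
    s ⊆ interior P ∨ s ⊆ (closure P)ᶜ := by
  refine hs.subset_or_subset isOpen_interior isClosed_closure.isOpen_compl
    (disjoint_compl_right.mono_left interior_subset_closure) fun x hx => ?_
  by_contra hx'
  simp only [mem_union, mem_compl_iff, not_or, not_not] at hx'
  exact hsP.notMem_of_mem_left hx ⟨hx'.2, hx'.1⟩

lemma IsDiscreteMultiset.finite_inter_support {d : ℕ} {m : Euc d → ℕ} (hm : IsDiscreteMultiset m)
    {K : Set (Euc d)} (hK : IsCompact K) : {y | y ∈ K ∧ m y ≠ 0}.Finite := by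
  choose U hU hfin using hm
  obtain ⟨t, -, hcov⟩ := hK.elim_nhds_subcover U fun x _ => hU x
  refine (t.finite_toSet.biUnion fun x _ => hfin x).subset ?_
  rintro y ⟨hyK, hy⟩
  obtain ⟨x, hx, hyU⟩ := mem_iUnion₂.1 (hcov hyK)
  exact mem_biUnion hx ⟨hyU, hy⟩

lemma IsConvexPolytope.isBounded {d : ℕ} {P : Set (Euc d)} (hP : IsConvexPolytope P) :
    Bornology.IsBounded P := by
  obtain ⟨⟨S, hS, rfl⟩, -⟩ := hP
  exact (hS.isCompact_convexHull ℝ).isBounded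

section HalfOpen

variable {d : ℕ} {P : Set (Euc d)} {h : Euc d}

lemma halfOpen_subset_closure : halfOpen P h ⊆ closure P := fun _ hx => hx.1

lemma mem_halfOpen_iff {x : Euc d} :
    x ∈ halfOpen P h ↔ ∀ᶠ t in 𝓝[>] (0 : ℝ), x + t • h ∈ interior P := by
  have hline : Tendsto (fun t : ℝ => x + t • h) (𝓝[>] 0) (𝓝 x) := by
    have : Continuous fun t : ℝ => x + t • h := by fun_prop
    simpa using (this.tendsto 0).mono_left nhdsWithin_le_nhds
  constructor
  · rintro ⟨-, ε, hε, hx⟩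
    exact mem_nhdsGT_iff_exists_Ioo_subset.2 ⟨ε, hε, fun t ht => hx t ht.1 ht.2⟩
  · intro hx
    obtain ⟨ε, hε, hsub⟩ := mem_nhdsGT_iff_exists_Ioo_subset.1 hx
    exact ⟨closure_mono interior_subset (mem_closure_of_tendsto hline hx),
      ε, hε, fun t ht₀ htε => hsub ⟨ht₀, htε⟩⟩

lemma eventually_notMem_frontier_and_mem_halfOpen_iff {x : Euc d}
    (hfin : {t : ℝ | x + t • h ∈ frontier P}.Finite) :
    ∀ᶠ t in 𝓝[>] (0 : ℝ), x + t • h ∉ frontier P ∧ (x + t • h ∈ halfOpen P h ↔ x ∈ halfOpen P h) := by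
  have hoff : ∀ᶠ t in 𝓝[>] (0 : ℝ), x + t • h ∉ frontier P := by
    have hnhds : ({t : ℝ | x + t • h ∈ frontier P} \ {0})ᶜ ∈ 𝓝 (0 : ℝ) :=
      hfin.sdiff.isClosed.isOpen_compl.mem_nhds fun h0 => h0.2 rfl
    filter_upwards [mem_nhdsWithin_of_mem_nhds hnhds, self_mem_nhdsWithin] with t ht ht₀
    exact fun hfr => ht ⟨hfr, ne_of_gt ht₀⟩
  obtain ⟨ε, hε, hsub⟩ := mem_nhdsGT_iff_exists_Ioo_subset.1 hoff
  have hconn : IsPreconnected ((fun t : ℝ => x + t • h) '' Ioo 0 ε) :=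
    isPreconnected_Ioo.image _ (by fun_prop)
  have hdisj : Disjoint ((fun t : ℝ => x + t • h) '' Ioo 0 ε) (frontier P) := by
    rw [disjoint_left]
    rintro _ ⟨t, ht, rfl⟩
    exact hsub ht
  have hIoo : Ioo (0 : ℝ) ε ∈ 𝓝[>] 0 := Ioo_mem_nhdsGT hε
  filter_upwards [hoff, hIoo] with t hoff_t ht
  refine ⟨hoff_t, ?_⟩
  rcases hconn.subset_interior_or_subset_compl_closure hdisj with hint | hext
  · have hx : x ∈ halfOpen P h :=
      mem_halfOpen_iff.2 (mem_of_superset hIoo fun s hs => hint ⟨s, hs, rfl⟩)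
    refine iff_of_true (mem_halfOpen_iff.2 ?_) hx
    filter_upwards [Ioo_mem_nhdsGT (sub_pos.2 ht.2)] with s hs
    rw [add_assoc, ← add_smul]
    exact hint ⟨t + s, ⟨by linarith [ht.1, hs.1], by linarith [hs.2]⟩, rfl⟩
  · refine iff_of_false (fun hmem => hext ⟨t, ht, rfl⟩ (halfOpen_subset_closure hmem))
      fun hx => ?_
    obtain ⟨s, hs_int, hs⟩ := ((mem_halfOpen_iff.1 hx).and hIoo).exists
    exact hext ⟨s, hs, rfl⟩ (interior_subset_closure hs_int)

theorem exists_notMem_boundarySum_coverCount_halfOpen_eq (hP : Bornology.IsBounded P)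
    (hdir : GoodDirection P h) {m : Euc d → ℕ} (hm : IsDiscreteMultiset m) (v : Euc d) :
    ∃ w, w ∉ boundarySum P m ∧ coverCount m (halfOpen P h) w = coverCount m (halfOpen P h) v := by
  set K : Set (Euc d) := (fun p : ℝ × Euc d => v + p.1 • h - p.2) '' (Icc 0 1 ×ˢ closure P)
  have hK : IsCompact K := (isCompact_Icc.prod hP.isCompact_closure).image (by fun_prop)
  have hfar : ∀ l ∉ K, ∀ t ∈ Icc (0 : ℝ) 1, v - l + t • h ∉ closure P := fun l hl t ht hmem =>
    hl ⟨(t, v - l + t • h), ⟨ht, hmem⟩, by dsimp only; abel⟩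
  set F := {l | l ∈ K ∧ m l ≠ 0}
  have hev : ∀ᶠ t in 𝓝[>] (0 : ℝ), t ∈ Icc (0 : ℝ) 1 ∧ ∀ l ∈ F,
      v - l + t • h ∉ frontier P ∧ (v - l + t • h ∈ halfOpen P h ↔ v - l ∈ halfOpen P h) := by
    have hIcc : ∀ᶠ t in 𝓝[>] (0 : ℝ), t ∈ Icc (0 : ℝ) 1 :=
      Icc_mem_nhdsGT_of_mem ⟨le_rfl, zero_lt_one⟩
    exact hIcc.and <| (hm.finite_inter_support hK).eventually_all.2 fun l _ =>
      eventually_notMem_frontier_and_mem_halfOpen_iff (hdir (v - l))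
  obtain ⟨c, hc, hcF⟩ := hev.exists
  refine ⟨v + c • h, ?_, finsum_congr fun l => ?_⟩
  · rintro ⟨l, hl, hfr⟩
    rw [add_sub_right_comm] at hfr
    by_cases hlK : l ∈ K
    · exact (hcF l ⟨hlK, hl⟩).1 hfr
    · exact hfar l hlK c hc (frontier_subset_closure hfr)
  · rcases eq_or_ne (m l) 0 with hl | hl
    · simp [hl]
    rw [add_sub_right_comm]
    by_cases hlK : l ∈ K
    · have hiff := (hcF l ⟨hlK, hl⟩).2
      by_cases hx : v - l ∈ halfOpen P h <;> simp [hx, hiff]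
    · have hout : ∀ t ∈ Icc (0 : ℝ) 1, v - l + t • h ∉ halfOpen P h := fun t ht hmem =>
        hfar l hlK t ht (halfOpen_subset_closure hmem)
      have h₀ := hout 0 ⟨le_rfl, zero_le_one⟩
      rw [zero_smul, add_zero] at h₀
      simp [indicator, hout c hc, h₀]

end HalfOpen

theorem stmt_4_general {d : ℕ} (P : Set (Euc d)) (hP : IsConvexPolytope P)
    (h : Euc d) (hdir : GoodDirection P h)
    (k : ℕ) (Λ : Euc d → ℕ) (hΛ : IsDiscreteMultiset Λ)
    (hTile : TilesHalfOpen P h Λ k) :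
    ∀ v : Euc d, coverCount Λ (halfOpen P h) v = k := by
  intro v
  obtain ⟨w, hw, hwv⟩ := exists_notMem_boundarySum_coverCount_halfOpen_eq hP.isBounded hdir hΛ v
  rw [← hwv]
  exact hTile w hw

/-- If `P^h` `k`-tiles ℝ^d with a discrete multiset Λ, then
`∑_{λ∈Λ} 1_{P^h+λ}(v) = k` for every `v ∈ ℝ^d`, with no exceptional set. -/
theorem stmt_4 {d : ℕ} (P : Set (Euc d)) (hP : IsConvexPolytope P)
    (h : Euc d) (hdir : GoodDirection P h)
    (k : ℕ) (hk : 0 < k) (Λ : Euc d → ℕ) (hΛ : IsDiscreteMultiset Λ)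
    (hTile : TilesHalfOpen P h Λ k) :
    ∀ v : Euc d, coverCount Λ (halfOpen P h) v = k :=
  stmt_4_general P hP h hdir k Λ hΛ hTile
end
end

section
/- Let P be a d-dimensional convex polytope, let h ∈ ℝ^d be a fixed vector such that every line with direction vector h meets ∂P in finitely many points, and let P^h be the half-open counterpart of P. Then P^h k-tiles ℝ^d with a discrete multiset Λ if and only if L^h_Λ(v) = k for every v ∈ ℝ^d. -/
open Set Pointwise

noncomputable section

/-!
A point `x` lies in `P^h` exactly when `x + c • h ∈ Int(P)` for all small `c > 0`. Since the line
through `x` in direction `h` crosses `∂P` only finitely often, for small `c > 0` the point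
`x + c • h` is off `∂P` and lies in `Int(P)` iff `x ∈ P^h`. By discreteness of `Λ` and boundedness
of `P`, only finitely many translates `P + λ` are relevant near `v`, so for a generic small
`c > 0` the point `v + c • h` avoids `∂P + Λ` and has the same `P^h`-covering number as `v`.
The tiling hypothesis then gives the count `k` at every `v`; conversely `L^h_Λ(v)` is that
covering number.
-/

open Filter Topology

theorem tendsto_add_smul_nhds_zero {E : Type*} [AddCommGroup E] [TopologicalSpace E]
    [Module ℝ E] [ContinuousAdd E] [ContinuousSMul ℝ E] (x h : E) :
    Tendsto (fun c : ℝ => x + c • h) (𝓝 0) (𝓝 x) := by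
  have hcont : Continuous fun c : ℝ => x + c • h := by fun_prop
  simpa using hcont.tendsto 0

section HalfOpen

variable {d : ℕ} {P : Set (Euc d)} {h x : Euc d}

theorem mem_halfOpen_iff_eventually :
    x ∈ halfOpen P h ↔ ∀ᶠ c in 𝓝[>] (0 : ℝ), x + c • h ∈ interior P := by
  have hε : (∃ ε : ℝ, 0 < ε ∧ ∀ c : ℝ, 0 < c → c < ε → x + c • h ∈ interior P) ↔
      ∀ᶠ c in 𝓝[>] (0 : ℝ), x + c • h ∈ interior P := by
    rw [Filter.Eventually, mem_nhdsGT_iff_exists_Ioo_subset]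
    exact exists_congr fun ε => and_congr_right fun _ =>
      ⟨fun H c hc => H c hc.1 hc.2, fun H c h0 hε => H ⟨h0, hε⟩⟩
  refine ⟨fun hx => hε.1 hx.2, fun hev => ⟨?_, hε.2 hev⟩⟩
  exact mem_closure_of_tendsto ((tendsto_add_smul_nhds_zero x h).mono_left nhdsWithin_le_nhds)
    (hev.mono fun _ hc => interior_subset hc)

theorem interior_subset_halfOpen : interior P ⊆ halfOpen P h := fun _ hx =>
  mem_halfOpen_iff_eventually.2 <| eventually_nhdsWithin_of_eventually_nhds <|
    tendsto_add_smul_nhds_zero _ h (isOpen_interior.mem_nhds hx)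

theorem mem_halfOpen_iff_of_notMem_frontier (hx : x ∉ frontier P) :
    x ∈ halfOpen P h ↔ x ∈ interior P :=
  ⟨fun hxo => by_contra fun hxi => hx ⟨hxo.1, hxi⟩, fun hxi => interior_subset_halfOpen hxi⟩

theorem GoodDirection.eventually_notMem_frontier (hdir : GoodDirection P h) (x : Euc d) :
    ∀ᶠ c in 𝓝[>] (0 : ℝ), x + c • h ∉ frontier P := by
  have hne : {c : ℝ | x + c • h ∈ frontier P}ᶜ ∈ 𝓝[≠] (0 : ℝ) := by
    simpa only [← compl_eq_univ_sdiff] using nhdsNE_of_nhdsNE_sdiff_finite univ_mem (hdir x)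
  exact nhdsWithin_mono _ (fun c hc => ne_of_gt hc) hne

/-- Off the line's finitely many boundary points, `c ↦ x + c • h` stays on one side of `∂P`,
so being in the interior for one small `c > 0` forces it for all of them. -/
theorem GoodDirection.eventually_mem_halfOpen_iff (hdir : GoodDirection P h) (x : Euc d) :
    ∀ᶠ c in 𝓝[>] (0 : ℝ), (x ∈ halfOpen P h ↔ x + c • h ∈ interior P) := by
  by_cases hx : x ∈ halfOpen P h
  · exact (mem_halfOpen_iff_eventually.1 hx).mono fun c hc => iff_of_true hx hc
  obtain ⟨ε, hε, hsub⟩ := mem_nhdsGT_iff_exists_Ioo_subset.1 (hdir.eventually_notMem_frontier x)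
  filter_upwards [Ioo_mem_nhdsGT hε] with c hc
  refine iff_of_false hx fun hci => hx (mem_halfOpen_iff_eventually.2 ?_)
  have hline : (fun c : ℝ => x + c • h) '' Ioo 0 ε ⊆ interior P := by
    refine (isPreconnected_Ioo.image _ (by fun_prop)).subset_of_closure_inter_subset
      isOpen_interior ⟨_, ⟨c, hc, rfl⟩, hci⟩ ?_
    rintro _ ⟨hcl, c', hc', rfl⟩
    by_contra hint
    exact hsub hc' ⟨closure_mono interior_subset hcl, hint⟩
  exact mem_of_superset (Ioo_mem_nhdsGT hε) fun c' hc' => hline ⟨c', hc', rfl⟩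

end HalfOpen

section Counting

variable {d : ℕ}

theorem IsDiscreteMultiset.finite_inter_compact {m : Euc d → ℕ} (hm : IsDiscreteMultiset m)
    {K : Set (Euc d)} (hK : IsCompact K) : {l | l ∈ K ∧ m l ≠ 0}.Finite := by
  choose U hU hfin using hm
  obtain ⟨t, -, ht⟩ := hK.elim_nhds_subcover U fun x _ => hU x
  refine (t.finite_toSet.biUnion fun x _ => hfin x).subset ?_
  rintro l ⟨hlK, hlm⟩
  obtain ⟨x, hx, hxl⟩ := mem_iUnion₂.1 (ht hlK)
  exact mem_biUnion hx ⟨hxl, hlm⟩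

theorem LEnum_eq_coverCount (m : Euc d → ℕ) (Q : Set (Euc d)) (v : Euc d) :
    LEnum m Q v = coverCount m Q v := by
  refine finsum_congr fun l => congrArg (m l * ·) (indicator_eq_indicator ?_ rfl)
  constructor
  · rintro ⟨_, ⟨q, hq, rfl⟩, rfl⟩
    simpa using hq
  · exact fun hq => ⟨(-1 : ℝ) • (v - l), ⟨v - l, hq, rfl⟩, by simp⟩

theorem coverCount_eq_sum_of_subset {m : Euc d → ℕ} {Q : Set (Euc d)} {v : Euc d}
    {T : Finset (Euc d)} (hT : ∀ l, m l ≠ 0 → v - l ∈ Q → l ∈ T) :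
    coverCount m Q v = ∑ l ∈ T, m l * Q.indicator 1 (v - l) := by
  refine finsum_eq_finsetSum_of_support_subset _ fun l hl => ?_
  obtain ⟨hm, hQ⟩ := mul_ne_zero_iff.1 hl
  exact hT l hm (by_contra fun hQ' => hQ (indicator_of_notMem hQ' _))

theorem coverCount_halfOpen_eventually {P : Set (Euc d)} (hP : Bornology.IsBounded P)
    {h : Euc d} (hdir : GoodDirection P h) {Λ : Euc d → ℕ} (hΛ : IsDiscreteMultiset Λ)
    (v : Euc d) :
    ∀ᶠ c in 𝓝[>] (0 : ℝ), v + c • h ∉ boundarySum P Λ ∧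
      coverCount Λ (halfOpen P h) (v + c • h) = coverCount Λ (halfOpen P h) v := by
  have hK : IsCompact ((fun p : ℝ × Euc d => v + p.1 • h - p.2) '' (Icc 0 1 ×ˢ closure P)) :=
    (isCompact_Icc.prod hP.isCompact_closure).image (by fun_prop)
  set T := (hΛ.finite_inter_compact hK).toFinset
  have hT : ∀ c ∈ Icc (0 : ℝ) 1, ∀ l, Λ l ≠ 0 → v + c • h - l ∈ closure P → l ∈ T :=
    fun c hc l hl hcl => (Set.Finite.mem_toFinset _).2
      ⟨⟨(c, v + c • h - l), ⟨hc, hcl⟩, by simp⟩, hl⟩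
  have hT₀ : ∀ l, Λ l ≠ 0 → v - l ∈ halfOpen P h → l ∈ T :=
    fun l hl hmem => hT 0 (left_mem_Icc.2 zero_le_one) l hl (by simpa using hmem.1)
  have hev : ∀ᶠ c in 𝓝[>] (0 : ℝ), ∀ l ∈ T,
      (v - l ∈ halfOpen P h ↔ v - l + c • h ∈ interior P) ∧ v - l + c • h ∉ frontier P :=
    (eventually_all_finset T).2 fun l _ =>
      (hdir.eventually_mem_halfOpen_iff _).and (hdir.eventually_notMem_frontier _)
  filter_upwards [hev, Ioo_mem_nhdsGT one_pos] with c hc hc1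
  have hshift : ∀ l, v + c • h - l = v - l + c • h := fun l => by abel
  have hTc : ∀ l, Λ l ≠ 0 → v + c • h - l ∈ closure P → l ∈ T := hT c (Ioo_subset_Icc_self hc1)
  refine ⟨fun ⟨l, hl, hfr⟩ => ?_, ?_⟩
  · exact (hc l (hTc l hl (frontier_subset_closure hfr))).2 (hshift l ▸ hfr)
  rw [coverCount_eq_sum_of_subset fun l hl hmem => hTc l hl hmem.1,
    coverCount_eq_sum_of_subset hT₀]
  refine Finset.sum_congr rfl fun l hl => congrArg (Λ l * ·) (indicator_eq_indicator ?_ rfl)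
  rw [hshift, mem_halfOpen_iff_of_notMem_frontier (hc l hl).2, (hc l hl).1]

end Counting

theorem stmt_6_general {d : ℕ} (P : Set (Euc d)) (hP : IsConvexPolytope P)
    (h : Euc d) (hdir : GoodDirection P h)
    (k : ℕ) (Λ : Euc d → ℕ) (hΛ : IsDiscreteMultiset Λ) :
    TilesHalfOpen P h Λ k ↔ ∀ v : Euc d, LEnumH Λ P h v = k := by
  obtain ⟨⟨S, hS, rfl⟩, -⟩ := hP
  refine ⟨fun hTile v => ?_, fun hL v _ => LEnum_eq_coverCount Λ _ v ▸ hL v⟩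
  obtain ⟨c, hvc, hcount⟩ :=
    (coverCount_halfOpen_eventually (hS.isCompact_convexHull (𝕜 := ℝ)).isBounded hdir hΛ v).exists
  rw [LEnumH, LEnum_eq_coverCount, ← hcount]
  exact hTile _ hvc

/-- `P^h` `k`-tiles ℝ^d with Λ iff `L^h_Λ(v) = k` for every `v ∈ ℝ^d`. -/
theorem stmt_6 {d : ℕ} (P : Set (Euc d)) (hP : IsConvexPolytope P)
    (h : Euc d) (hdir : GoodDirection P h)
    (k : ℕ) (hk : 0 < k) (Λ : Euc d → ℕ) (hΛ : IsDiscreteMultiset Λ) :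
    TilesHalfOpen P h Λ k ↔ ∀ v : Euc d, LEnumH Λ P h v = k :=
  stmt_6_general P hP h hdir k Λ hΛ
end
end

section
/- Let P be a convex polytope that k-tiles ℝ^d with a discrete multiset Λ, and suppose that Λ is the disjoint union of two discrete multisets Λ₁ and Λ₂ (i.e. the multiplicity function of Λ is the sum of those of Λ₁ and Λ₂). If the set ℝ^d \ ((∂P + Λ₁) ∩ (∂P + Λ₂)) is path-connected and Λ₁ is non-empty, then there exists a positive integer m such that P m-tiles ℝ^d with Λ₁. -/
open Set Pointwise

noncomputable section

/-!
Let `cᵢ(v)` count the translates `P + λ`, `λ ∈ Λᵢ`, containing `v`. Off `∂P + Λ₁` the function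
`c₁` is locally constant, and off `∂P + Λ₂` so is `k - c₂`; where both are defined they agree,
because `c₁ + c₂ = k` off `∂P + Λ`. Hence they glue to a locally constant function on the
connected set `ℝ^d \ ((∂P + Λ₁) ∩ (∂P + Λ₂))`, so `c₁` is constant off `∂P + Λ₁`. The constant is
positive: `∂P + Λ₁` is a locally finite union of translates of `∂P`, so it has empty interior and
misses some point of `int P + λ₀` with `λ₀ ∈ Λ₁`.
-/

theorem eventually_mem_iff_of_notMem_frontier {X : Type*} [TopologicalSpace X] {s : Set X}
    {x : X} (hx : x ∉ frontier s) : ∀ᶠ y in nhds x, y ∈ s ↔ x ∈ s := by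
  by_cases hxs : x ∈ s
  · have hint : x ∈ interior s := by_contra fun h => hx ⟨subset_closure hxs, h⟩
    filter_upwards [mem_interior_iff_mem_nhds.1 hint] with y hy
    exact iff_of_true hy hxs
  · have hcl : x ∉ closure s := fun h => hx ⟨h, fun h' => hxs (interior_subset h')⟩
    filter_upwards [isClosed_closure.isOpen_compl.mem_nhds hcl] with y hy
    exact iff_of_false (fun h => hy (subset_closure h)) hxs

theorem LocallyFinite.interior_iUnion_eq_empty {X ι : Type*} [TopologicalSpace X]
    {f : ι → Set X} (hf : LocallyFinite f) (hc : ∀ i, IsClosed (f i))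
    (hi : ∀ i, interior (f i) = ∅) : interior (⋃ i, f i) = ∅ := by
  refine eq_empty_iff_forall_notMem.2 fun x hx => ?_
  obtain ⟨U, hU, hUf⟩ := hf x
  have hdense : Dense (⋂ i ∈ {i | (f i ∩ U).Nonempty}, (f i)ᶜ) := by
    rw [← sInter_image]
    refine (hUf.image _).dense_sInter ?_ ?_ <;> rw [forall_mem_image]
    exacts [fun i _ => (hc i).isOpen_compl, fun i _ => interior_eq_empty_iff_dense_compl.1 (hi i)]
  obtain ⟨y, ⟨hyU, hyf⟩, hy⟩ := hdense.inter_open_nonempty _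
    (isOpen_interior.inter isOpen_interior) ⟨x, hx, mem_interior_iff_mem_nhds.2 hU⟩
  obtain ⟨i, hyi⟩ := mem_iUnion.1 (interior_subset hyU)
  exact mem_iInter₂.1 hy i ⟨y, hyi, interior_subset hyf⟩ hyi

theorem IsPreconnected.apply_eq_of_eqOn_inter {X Y : Type*} [TopologicalSpace X]
    [TopologicalSpace Y] [DiscreteTopology Y] {U V : Set X} {f g : X → Y} (hU : IsOpen U)
    (hV : IsOpen V) (hUV : IsPreconnected (U ∪ V)) (hf : ContinuousOn f U)
    (hg : ContinuousOn g V) (hfg : EqOn f g (U ∩ V)) {x y : X} (hx : x ∈ U) (hy : y ∈ U) :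
    f x = f y := by
  classical
  have hglue_f : EqOn (U.piecewise f g) f U := fun z hz => piecewise_eq_of_mem _ _ _ hz
  have hglue_g : EqOn (U.piecewise f g) g V := fun z hz => by
    by_cases hzU : z ∈ U
    · rw [piecewise_eq_of_mem _ _ _ hzU, hfg ⟨hzU, hz⟩]
    · exact piecewise_eq_of_notMem _ _ _ hzU
  have hcont : ContinuousOn (U.piecewise f g) (U ∪ V) :=
    (hf.congr hglue_f).union_of_isOpen (hg.congr hglue_g) hU hV
  rw [← hglue_f hx, ← hglue_f hy]
  exact hUV.constant hcont (Or.inl hx) (Or.inl hy)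

theorem IsCompact.frontier {X : Type*} [TopologicalSpace X] [T2Space X] {s : Set X}
    (hs : IsCompact s) : IsCompact (frontier s) :=
  hs.of_isClosed_subset isClosed_frontier hs.isClosed.frontier_subset

section Multisets

variable {d : ℕ}

def shiftedCopy (m : Euc d → ℕ) (K : Set (Euc d)) (l : Euc d) : Set (Euc d) :=
  {v | m l ≠ 0 ∧ v - l ∈ K}

theorem isClosed_shiftedCopy (m : Euc d → ℕ) {K : Set (Euc d)} (hK : IsClosed K) (l : Euc d) :
    IsClosed (shiftedCopy m K l) :=
  isClosed_const.inter (hK.preimage (continuous_sub_right l))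

theorem interior_shiftedCopy_eq_empty (m : Euc d → ℕ) {K : Set (Euc d)}
    (hK : interior K = ∅) (l : Euc d) : interior (shiftedCopy m K l) = ∅ := by
  refine subset_empty_iff.1 ((interior_mono fun v hv => hv.2).trans ?_)
  change interior (Homeomorph.subRight l ⁻¹' K) ⊆ ∅
  rw [← Homeomorph.preimage_interior, hK, preimage_empty]

theorem boundarySum_eq_iUnion (P : Set (Euc d)) (m : Euc d → ℕ) :
    boundarySum P m = ⋃ l, shiftedCopy m (frontier P) l := by
  ext v
  simp [boundarySum, shiftedCopy]

theorem boundarySum_add (P : Set (Euc d)) (m₁ m₂ : Euc d → ℕ) :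
    boundarySum P (m₁ + m₂) = boundarySum P m₁ ∪ boundarySum P m₂ := by
  ext v
  simp only [boundarySum, mem_ofPred_eq, mem_union, Pi.add_apply, ne_eq, Nat.add_eq_zero_iff,
    not_and_or, or_and_right, exists_or]

theorem mem_shiftedCopy_of_mul_indicator_ne_zero {m : Euc d → ℕ} {P : Set (Euc d)}
    {l v : Euc d} (h : m l * P.indicator 1 (v - l) ≠ 0) : v ∈ shiftedCopy m P l := by
  rw [mul_ne_zero_iff, indicator_apply_ne_zero] at h
  exact ⟨h.1, h.2.1⟩

namespace IsDiscreteMultiset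

variable {m : Euc d → ℕ}

theorem mono {m' : Euc d → ℕ} (hm : IsDiscreteMultiset m) (hle : m' ≤ m) :
    IsDiscreteMultiset m' := fun x => by
  obtain ⟨U, hU, hfin⟩ := hm x
  exact ⟨U, hU, hfin.subset fun y hy => ⟨hy.1, fun h => hy.2 (Nat.eq_zero_of_le_zero (h ▸ hle y))⟩⟩

theorem finite_support_inter (hm : IsDiscreteMultiset m) {K : Set (Euc d)} (hK : IsCompact K) :
    (Function.support m ∩ K).Finite := by
  choose U hU hfin using hm
  obtain ⟨t, -, ht⟩ := hK.elim_nhds_subcover U fun x _ => hU x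
  refine (t.finite_toSet.biUnion fun x _ => hfin x).subset ?_
  rintro l ⟨hl, hlK⟩
  obtain ⟨x, hx, hxl⟩ := mem_iUnion₂.1 (ht hlK)
  exact mem_biUnion hx ⟨hxl, hl⟩

theorem locallyFinite_shiftedCopy (hm : IsDiscreteMultiset m) {K : Set (Euc d)}
    (hK : IsCompact K) : LocallyFinite (shiftedCopy m K) := fun x => by
  have hdiff : IsCompact ((fun p : Euc d × Euc d => p.1 - p.2) '' (Metric.closedBall x 1 ×ˢ K)) :=
    ((isCompact_closedBall x 1).prod hK).image continuous_sub
  refine ⟨_, Metric.closedBall_mem_nhds x one_pos, (hm.finite_support_inter hdiff).subset ?_⟩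
  rintro l ⟨v, ⟨hl, hvK⟩, hv⟩
  exact ⟨hl, (v, v - l), ⟨hv, hvK⟩, sub_sub_cancel v l⟩

theorem isClosed_boundarySum (hm : IsDiscreteMultiset m) {P : Set (Euc d)} (hP : IsCompact P) :
    IsClosed (boundarySum P m) := by
  rw [boundarySum_eq_iUnion]
  exact (hm.locallyFinite_shiftedCopy hP.frontier).isClosed_iUnion
    (isClosed_shiftedCopy m isClosed_frontier)

theorem interior_boundarySum_eq_empty (hm : IsDiscreteMultiset m) {P : Set (Euc d)}
    (hP : IsCompact P) : interior (boundarySum P m) = ∅ := by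
  rw [boundarySum_eq_iUnion]
  exact (hm.locallyFinite_shiftedCopy hP.frontier).interior_iUnion_eq_empty
    (isClosed_shiftedCopy m isClosed_frontier)
    (interior_shiftedCopy_eq_empty m (interior_frontier hP.isClosed))

theorem hasFiniteSupport_mul_indicator (hm : IsDiscreteMultiset m) {P : Set (Euc d)}
    (hP : IsCompact P) (v : Euc d) :
    Function.HasFiniteSupport fun l => m l * P.indicator 1 (v - l) :=
  ((hm.locallyFinite_shiftedCopy hP).point_finite v).subset fun _ hl =>
    mem_shiftedCopy_of_mul_indicator_ne_zero hl

theorem continuousOn_coverCount (hm : IsDiscreteMultiset m) {P : Set (Euc d)}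
    (hP : IsCompact P) : ContinuousOn (coverCount m P) (boundarySum P m)ᶜ := by
  intro x hx
  have hterm (l : Euc d) : ContinuousAt (fun v => m l * P.indicator 1 (v - l)) x := by
    by_cases hl : m l = 0
    · simpa [hl] using continuousAt_const
    have hfr : x - l ∉ frontier P := fun h => hx ⟨l, hl, h⟩
    have hconst : (fun v => m l * P.indicator 1 (v - l)) =ᶠ[nhds x]
        fun _ => m l * P.indicator 1 (x - l) := by
      filter_upwards [(continuous_sub_right l).continuousAt.eventually
        (eventually_mem_iff_of_notMem_frontier hfr)] with v hv
      by_cases hxl : x - l ∈ P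
      · simp [indicator_of_mem hxl, indicator_of_mem (hv.2 hxl)]
      · simp [indicator_of_notMem hxl, indicator_of_notMem (mt hv.1 hxl)]
    exact continuousAt_const.congr hconst.symm
  have hlf : LocallyFinite fun l => Function.support fun v => m l * P.indicator 1 (v - l) :=
    (hm.locallyFinite_shiftedCopy hP).subset fun _ _ hv =>
      mem_shiftedCopy_of_mul_indicator_ne_zero hv
  obtain ⟨s, hs⟩ := finsum_eventually_eq_sum hlf x
  have hs' : coverCount m P =ᶠ[nhds x] fun v => ∑ l ∈ s, m l * P.indicator 1 (v - l) := hs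
  exact (ContinuousAt.congr (tendsto_finsetSum s fun l _ => hterm l) hs'.symm).continuousWithinAt

theorem exists_notMem_boundarySum_coverCount_pos (hm : IsDiscreteMultiset m) {P : Set (Euc d)}
    (hP : IsCompact P) (hPint : (interior P).Nonempty) {l₀ : Euc d} (hl₀ : m l₀ ≠ 0) :
    ∃ v ∉ boundarySum P m, 0 < coverCount m P v := by
  obtain ⟨p, hp⟩ := hPint
  have hopen : IsOpen ((· - l₀) ⁻¹' interior P) :=
    isOpen_interior.preimage (continuous_sub_right l₀)
  have hnot : ¬ (· - l₀) ⁻¹' interior P ⊆ boundarySum P m := fun h => by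
    have := interior_maximal h hopen
    rw [hm.interior_boundarySum_eq_empty hP] at this
    exact this (show p + l₀ - l₀ ∈ interior P by rwa [add_sub_cancel_right])
  obtain ⟨v, hvP, hvB⟩ := not_subset.1 hnot
  refine ⟨v, hvB, ?_⟩
  calc 0 < m l₀ * P.indicator 1 (v - l₀) := by
        rw [indicator_of_mem (interior_subset hvP)]
        simpa [Nat.pos_iff_ne_zero] using hl₀
    _ ≤ coverCount m P v :=
        single_le_finsum l₀ (hm.hasFiniteSupport_mul_indicator hP v) fun _ => Nat.zero_le _

end IsDiscreteMultiset

theorem coverCount_add {m₁ m₂ : Euc d → ℕ} (hm₁ : IsDiscreteMultiset m₁)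
    (hm₂ : IsDiscreteMultiset m₂) {P : Set (Euc d)} (hP : IsCompact P) (v : Euc d) :
    coverCount (m₁ + m₂) P v = coverCount m₁ P v + coverCount m₂ P v := by
  rw [coverCount, coverCount, coverCount, ← finsum_add_distrib
    (hm₁.hasFiniteSupport_mul_indicator hP v) (hm₂.hasFiniteSupport_mul_indicator hP v)]
  exact finsum_congr fun l => add_mul _ _ _

end Multisets

theorem stmt_12_general {d : ℕ} (P : Set (Euc d)) (hP : IsConvexPolytope P)
    (k : ℕ) (Λ Λ₁ Λ₂ : Euc d → ℕ)
    (hΛ : IsDiscreteMultiset Λ)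
    (hsplit : ∀ x : Euc d, Λ x = Λ₁ x + Λ₂ x)
    (hTile : Tiles P Λ k)
    (hconn : IsPathConnected ((boundarySum P Λ₁ ∩ boundarySum P Λ₂)ᶜ))
    (hne : ∃ x : Euc d, Λ₁ x ≠ 0) :
    ∃ m : ℕ, 0 < m ∧ Tiles P Λ₁ m := by
  obtain ⟨⟨S, hS, hPS⟩, hPint⟩ := hP
  have hPc : IsCompact P := by rw [hPS]; exact hS.isCompact_convexHull (𝕜 := ℝ)
  obtain rfl : Λ = Λ₁ + Λ₂ := funext hsplit
  have hΛ₁ : IsDiscreteMultiset Λ₁ := hΛ.mono fun _ => Nat.le_add_right _ _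
  have hΛ₂ : IsDiscreteMultiset Λ₂ := hΛ.mono fun _ => Nat.le_add_left _ _
  obtain ⟨l₀, hl₀⟩ := hne
  obtain ⟨v, hv, hpos⟩ := hΛ₁.exists_notMem_boundarySum_coverCount_pos hPc hPint hl₀
  have hcount : EqOn (coverCount Λ₁ P) (fun w => k - coverCount Λ₂ P w)
      ((boundarySum P Λ₁)ᶜ ∩ (boundarySum P Λ₂)ᶜ) := fun w hw => by
    have hk := hTile w (by rw [boundarySum_add]; exact fun h => h.elim hw.1 hw.2)
    rw [coverCount_add hΛ₁ hΛ₂ hPc] at hk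
    show coverCount Λ₁ P w = k - coverCount Λ₂ P w
    omega
  refine ⟨coverCount Λ₁ P v, hpos, fun w hw => ?_⟩
  exact IsPreconnected.apply_eq_of_eqOn_inter (hΛ₁.isClosed_boundarySum hPc).isOpen_compl
    (hΛ₂.isClosed_boundarySum hPc).isOpen_compl
    (by rw [← compl_inter]; exact hconn.isConnected.isPreconnected)
    (hΛ₁.continuousOn_coverCount hPc)
    (continuous_of_discreteTopology.comp_continuousOn (hΛ₂.continuousOn_coverCount hPc))
    hcount hw hv

/-- If `P` `k`-tiles ℝ^d with Λ, Λ is the disjoint union of discrete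
multisets Λ₁ and Λ₂, the set `ℝ^d \ ((∂P + Λ₁) ∩ (∂P + Λ₂))` is path-connected, and Λ₁ is
non-empty, then `P` `m`-tiles ℝ^d with Λ₁ for some positive integer `m`. -/
theorem stmt_12 {d : ℕ} (P : Set (Euc d)) (hP : IsConvexPolytope P)
    (k : ℕ) (hk : 0 < k) (Λ Λ₁ Λ₂ : Euc d → ℕ)
    (hΛ : IsDiscreteMultiset Λ)
    (hsplit : ∀ x : Euc d, Λ x = Λ₁ x + Λ₂ x)
    (hTile : Tiles P Λ k)
    (hconn : IsPathConnected ((boundarySum P Λ₁ ∩ boundarySum P Λ₂)ᶜ))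
    (hne : ∃ x : Euc d, Λ₁ x ≠ 0) :
    ∃ m : ℕ, 0 < m ∧ Tiles P Λ₁ m :=
  stmt_12_general P hP k Λ Λ₁ Λ₂ hΛ hsplit hTile hconn hne
end
end

section
/- Let α_1, …, α_k be irrational real numbers such that 1, α_1, …, α_k are linearly independent over ℚ, and let a' = (α_1, …, α_k) ∈ ℝ^k. Then for every ε > 0 there exist j ∈ ℕ and λ ∈ ℤ^k such that |(2j+1)·a' + λ| < ε; equivalently, some odd integer multiple of a' is ε-close to 0 modulo ℤ^k. -/
/-!
Since `(2j+1)α = j • (2α) + α`, the claim is the inhomogeneous Kronecker theorem for `2α` (whose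
entries are independent over `ℚ` together with `1`) with target `-α`.

Kronecker's theorem is proved by Bohr's argument. If for every `t` some coordinate of `t β - x`
stays at distance `≥ ε` from `ℤ`, then `F t = ∏ᵢ (1 + 𝐞 (t βᵢ - xᵢ))` satisfies
`‖F t‖ ≤ 2 ^ k * r` with `r < 1`. Expanding, `(F t) ^ p` is a trigonometric polynomial in `t` with
the frequencies `𝐞 (m ⬝ β)`, `m ∈ {0, …, p}ᵏ`, which are distinct by independence; its coefficients
have norms summing to `2 ^ (p k)`, and averaging over `t` bounds each of them by `sup ‖F‖ ^ p`.
Hence `2 ^ (p k) ≤ (p + 1) ^ k * (2 ^ k * r) ^ p`, which fails for large `p`.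
-/

open Finset Filter Topology Real FourierTransform

lemma norm_geom_sum_le_of_norm_eq_one {w : ℂ} (hw : ‖w‖ = 1) (hw1 : w ≠ 1) (N : ℕ) :
    ‖∑ t ∈ range N, w ^ t‖ ≤ 2 / ‖w - 1‖ := by
  rw [geom_sum_eq hw1, norm_div]
  gcongr
  calc ‖w ^ N - 1‖ ≤ ‖w ^ N‖ + ‖(1 : ℂ)‖ := norm_sub_le _ _
    _ = 2 := by rw [norm_pow, hw, one_pow, norm_one]; norm_num

lemma tendsto_inv_mul_geom_sum_of_norm_eq_one {w : ℂ} (hw : ‖w‖ = 1) :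
    Tendsto (fun N : ℕ => (N : ℂ)⁻¹ * ∑ t ∈ range N, w ^ t) atTop
      (𝓝 (if w = 1 then 1 else 0)) := by
  split_ifs with hw1
  · refine tendsto_const_nhds.congr' ?_
    filter_upwards [eventually_ne_atTop 0] with N hN
    simp [hw1, hN]
  · refine squeeze_zero_norm (fun N => ?_)
      (by simpa using (tendsto_inv_atTop_nhds_zero_nat (𝕜 := ℝ)).mul_const (2 / ‖w - 1‖))
    rw [norm_mul, norm_inv, Complex.norm_natCast]
    gcongr
    exact norm_geom_sum_le_of_norm_eq_one hw hw1 N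

theorem norm_le_of_forall_norm_sum_mul_pow_le {ι : Type*} {S : Finset ι} {z : ι → Circle}
    (hz : Set.InjOn z S) (a : ι → ℂ) {B : ℝ}
    (hB : ∀ t : ℕ, ‖∑ m ∈ S, a m * (z m : ℂ) ^ t‖ ≤ B) {s : ι} (hs : s ∈ S) :
    ‖a s‖ ≤ B := by
  classical
  set w : ι → ℂ := fun m => ((z m / z s : Circle) : ℂ)
  have hw : ∀ m ∈ S, w m = 1 ↔ m = s := fun m hm => by
    simp only [w, Circle.coe_eq_one, div_eq_one]
    exact ⟨fun h => hz hm hs h, fun h => h ▸ rfl⟩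
  have hlim : Tendsto (fun N : ℕ => ∑ m ∈ S, a m * ((N : ℂ)⁻¹ * ∑ t ∈ range N, w m ^ t))
      atTop (𝓝 (a s)) := by
    convert tendsto_finsetSum S fun m _ =>
      (tendsto_inv_mul_geom_sum_of_norm_eq_one (Circle.norm_coe (z m / z s))).const_mul (a m)
    rw [sum_eq_single_of_mem s hs fun m hm hms => by
      rw [if_neg ((hw m hm).not.mpr hms), mul_zero]]
    simp
  refine le_of_tendsto hlim.norm ?_
  filter_upwards [eventually_ne_atTop 0] with N hN
  have hswap : ∑ m ∈ S, a m * ((N : ℂ)⁻¹ * ∑ t ∈ range N, w m ^ t) =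
      (N : ℂ)⁻¹ * ∑ t ∈ range N, (∑ m ∈ S, a m * (z m : ℂ) ^ t) * (z s : ℂ)⁻¹ ^ t := by
    simp only [w, div_eq_mul_inv, Circle.coe_mul, Circle.coe_inv, mul_pow, mul_sum, sum_mul]
    rw [sum_comm]
    exact sum_congr rfl fun _ _ => sum_congr rfl fun _ _ => by ring
  rw [hswap, norm_mul, norm_inv, Complex.norm_natCast]
  calc (N : ℝ)⁻¹ * ‖∑ t ∈ range N, (∑ m ∈ S, a m * (z m : ℂ) ^ t) * (z s : ℂ)⁻¹ ^ t‖
      ≤ (N : ℝ)⁻¹ * ∑ t ∈ range N, B := by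
        gcongr
        refine (norm_sum_le _ _).trans (sum_le_sum fun t _ => ?_)
        rw [norm_mul, norm_pow, norm_inv, Circle.norm_coe, inv_one, one_pow, mul_one]
        exact hB t
    _ = B := by
        rw [sum_const, card_range, nsmul_eq_mul, inv_mul_cancel_left₀ (by exact_mod_cast hN)]

lemma norm_one_add_fourierChar_sq (θ : ℝ) :
    ‖1 + (𝐞 θ : ℂ)‖ ^ 2 = 2 + 2 * cos (2 * π * θ) := by
  rw [← Complex.normSq_eq_norm_sq, Complex.normSq_apply, fourierChar_apply, Complex.add_re,
    Complex.add_im, Complex.exp_ofReal_mul_I_re, Complex.exp_ofReal_mul_I_im, Complex.one_re,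
    Complex.one_im]
  nlinarith [sin_sq_add_cos_sq (2 * π * θ)]

lemma cos_two_pi_mul_le_of_forall_le_abs_sub_int {θ ε : ℝ} (hε : 0 ≤ ε)
    (h : ∀ z : ℤ, ε ≤ |θ - z|) : cos (2 * π * θ) ≤ cos (2 * π * ε) := by
  have hδ : ε ≤ |θ - round θ| := h (round θ)
  have hδ' : |θ - round θ| ≤ 1 / 2 := abs_sub_round θ
  calc cos (2 * π * θ) = cos (2 * π * (θ - round θ) + round θ * (2 * π)) := by ring_nf
    _ = cos (2 * π * |θ - round θ|) := by
        rw [cos_add_int_mul_two_pi, ← cos_abs, abs_mul, abs_of_pos two_pi_pos]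
    _ ≤ cos (2 * π * ε) := by
        apply cos_le_cos_of_nonneg_of_le_pi (by positivity) (by nlinarith [pi_pos])
        nlinarith [pi_pos]

lemma norm_one_add_fourierChar_le_of_forall_le_abs_sub_int {θ ε : ℝ} (hε : 0 ≤ ε)
    (h : ∀ z : ℤ, ε ≤ |θ - z|) : ‖1 + (𝐞 θ : ℂ)‖ ≤ ‖1 + (𝐞 ε : ℂ)‖ := by
  rw [← sq_le_sq₀ (norm_nonneg _) (norm_nonneg _), norm_one_add_fourierChar_sq,
    norm_one_add_fourierChar_sq]
  linarith [cos_two_pi_mul_le_of_forall_le_abs_sub_int hε h]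

lemma norm_one_add_fourierChar_lt_two {ε : ℝ} (hε : 0 < ε) (hε1 : ε < 1) :
    ‖1 + (𝐞 ε : ℂ)‖ < 2 := by
  have hcos : cos (2 * π * ε) < 1 :=
    (cos_le_one _).lt_of_ne fun h => by
      have := (cos_eq_one_iff_of_lt_of_lt (by nlinarith [pi_pos]) (by nlinarith [pi_pos])).mp h
      nlinarith [pi_pos]
  rw [← sq_lt_sq₀ (norm_nonneg _) zero_le_two, norm_one_add_fourierChar_sq]
  linarith

lemma norm_one_add_circle_le_two (u : Circle) : ‖1 + (u : ℂ)‖ ≤ 2 :=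
  (norm_add_le _ _).trans (by rw [norm_one, Circle.norm_coe]; norm_num)

lemma coe_fourierChar_sum {ι : Type*} (s : Finset ι) (f : ι → ℝ) :
    (𝐞 (∑ i ∈ s, f i) : ℂ) = ∏ i ∈ s, (𝐞 (f i) : ℂ) := by
  induction s using Finset.cons_induction with
  | empty => simp
  | cons a s ha ih => rw [sum_cons, prod_cons, AddChar.map_add_eq_mul, Circle.coe_mul, ih]

lemma coe_fourierChar_natCast_mul (n : ℕ) (θ : ℝ) : (𝐞 (n * θ) : ℂ) = (𝐞 θ : ℂ) ^ n := by
  rw [← nsmul_eq_mul, AddChar.map_nsmul_eq_pow, Circle.coe_pow]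

lemma prod_one_add_fourierChar_pow {ι : Type*} [Fintype ι] [DecidableEq ι] (θ : ι → ℝ)
    (p : ℕ) :
    (∏ i, (1 + (𝐞 (θ i) : ℂ))) ^ p = ∑ m ∈ Fintype.piFinset fun _ => range (p + 1),
      (∏ i, (p.choose (m i) : ℂ)) * 𝐞 (∑ i, m i * θ i) := by
  simp_rw [← Finset.prod_pow, add_comm (1 : ℂ), add_pow, one_pow, mul_one]
  rw [prod_univ_sum]
  refine sum_congr rfl fun m _ => ?_
  rw [prod_mul_distrib, mul_comm, coe_fourierChar_sum]
  simp_rw [coe_fourierChar_natCast_mul]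

lemma exists_int_sub_eq_of_fourierChar_eq {a b : ℝ} (h : 𝐞 a = 𝐞 b) :
    ∃ n : ℤ, a - b = n := by
  rw [fourierChar_apply', fourierChar_apply', Circle.exp_eq_exp] at h
  obtain ⟨n, hn⟩ := h
  refine ⟨n, mul_left_cancel₀ two_pi_pos.ne' ?_⟩
  linarith

lemma injective_fourierChar_sum_natCast_mul {ι : Type*} [Fintype ι] {β : ι → ℝ}
    (hβ : ∀ d : ι → ℤ, (∃ n : ℤ, ∑ i, d i * β i = n) → d = 0) :
    Function.Injective fun m : ι → ℕ => 𝐞 (∑ i, m i * β i) := by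
  intro m m' h
  obtain ⟨n, hn⟩ := exists_int_sub_eq_of_fourierChar_eq h
  have hd := hβ (fun i => (m i : ℤ) - m' i) ⟨n, by simpa [sub_mul, sum_sub_distrib] using hn⟩
  funext i
  have := congrFun hd i
  simp only [Pi.zero_apply, sub_eq_zero, Nat.cast_inj] at this
  exact this

lemma norm_prod_le_two_pow_mul {ι : Type*} [Fintype ι] {f : ι → ℂ} (hf : ∀ i, ‖f i‖ ≤ 2)
    {r : ℝ} {i₀ : ι} (hi₀ : ‖f i₀‖ ≤ 2 * r) : ‖∏ i, f i‖ ≤ 2 ^ Fintype.card ι * r := by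
  classical
  have hcard : (univ.erase i₀).card + 1 = Fintype.card ι := card_erase_add_one (mem_univ i₀)
  rw [norm_prod, ← mul_prod_erase univ _ (mem_univ i₀), ← hcard, pow_succ]
  calc ‖f i₀‖ * ∏ i ∈ univ.erase i₀, ‖f i‖ ≤ 2 * r * ∏ _i ∈ univ.erase i₀, (2 : ℝ) := by
        gcongr with i
        exacts [(norm_nonneg _).trans hi₀, hf i]
    _ = _ := by rw [prod_const]; ring

lemma exists_add_one_pow_mul_pow_lt_one (n : ℕ) {r : ℝ} (hr0 : 0 ≤ r) (hr1 : r < 1) :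
    ∃ p : ℕ, ((p : ℝ) + 1) ^ n * r ^ p < 1 := by
  obtain ⟨p, hp, hp1⟩ := ((tendsto_pow_const_mul_const_pow_of_lt_one n hr0 hr1).eventually
    (gt_mem_nhds (by positivity : (0 : ℝ) < (1 / 2) ^ n))).and (eventually_ge_atTop 1) |>.exists
  refine ⟨p, ?_⟩
  have hp1' : (1 : ℝ) ≤ p := by exact_mod_cast hp1
  calc ((p : ℝ) + 1) ^ n * r ^ p ≤ (2 * p) ^ n * r ^ p := by gcongr; linarith
    _ = 2 ^ n * ((p : ℝ) ^ n * r ^ p) := by ring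
    _ < 2 ^ n * (1 / 2) ^ n := by gcongr
    _ = 1 := by rw [← mul_pow]; norm_num

theorem two_pow_pow_card_le_of_forall_norm_prod_le {ι : Type*} [Fintype ι] {β : ι → ℝ}
    (hβ : ∀ d : ι → ℤ, (∃ n : ℤ, ∑ i, d i * β i = n) → d = 0) (x : ι → ℝ) {B : ℝ}
    (hB : ∀ t : ℕ, ‖∏ i, (1 + (𝐞 (t * β i - x i) : ℂ))‖ ≤ B) (p : ℕ) :
    ((2 : ℝ) ^ p) ^ Fintype.card ι ≤ ((p : ℝ) + 1) ^ Fintype.card ι * B ^ p := by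
  classical
  set S := Fintype.piFinset fun _ : ι => range (p + 1)
  set a : (ι → ℕ) → ℂ := fun m => (∏ i, (p.choose (m i) : ℂ)) * 𝐞 (-∑ i, m i * x i)
  set z : (ι → ℕ) → Circle := fun m => 𝐞 (∑ i, m i * β i)
  have hexpand : ∀ t : ℕ,
      (∏ i, (1 + (𝐞 (t * β i - x i) : ℂ))) ^ p = ∑ m ∈ S, a m * (z m : ℂ) ^ t := fun t => by
    rw [prod_one_add_fourierChar_pow]
    refine sum_congr rfl fun m _ => ?_
    have : ∑ i, (m i : ℝ) * (t * β i - x i) = -∑ i, m i * x i + t • ∑ i, m i * β i := by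
      simp only [nsmul_eq_mul, mul_sum, ← sum_neg_distrib, ← sum_add_distrib]
      exact sum_congr rfl fun i _ => by ring
    simp only [a, z, this, AddChar.map_add_eq_mul, AddChar.map_nsmul_eq_pow, Circle.coe_mul,
      Circle.coe_pow, mul_assoc]
  have hcoeff : ∀ m ∈ S, ‖a m‖ ≤ B ^ p := fun m hm =>
    norm_le_of_forall_norm_sum_mul_pow_le (injective_fourierChar_sum_natCast_mul hβ).injOn a
      (fun t => by rw [← hexpand, norm_pow]; exact pow_le_pow_left₀ (norm_nonneg _) (hB t) p) hm
  have hsum : ∑ m ∈ S, ‖a m‖ = ((2 : ℝ) ^ p) ^ Fintype.card ι := by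
    simp only [a, S, norm_mul, Circle.norm_coe, mul_one, norm_prod, Complex.norm_natCast]
    rw [← prod_univ_sum (fun _ : ι => range (p + 1)) fun _ j => (p.choose j : ℝ), prod_const,
      card_univ]
    exact_mod_cast congrArg (· ^ Fintype.card ι) (Nat.sum_range_choose p)
  calc ((2 : ℝ) ^ p) ^ Fintype.card ι = ∑ m ∈ S, ‖a m‖ := hsum.symm
    _ ≤ ∑ _m ∈ S, B ^ p := sum_le_sum hcoeff
    _ = ((p : ℝ) + 1) ^ Fintype.card ι * B ^ p := by
        rw [sum_const, nsmul_eq_mul, Fintype.card_piFinset, prod_const, card_range, card_univ]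
        push_cast; ring

theorem exists_nat_forall_abs_mul_sub_sub_int_lt {ι : Type*} [Fintype ι] {β : ι → ℝ}
    (hβ : ∀ d : ι → ℤ, (∃ n : ℤ, ∑ i, d i * β i = n) → d = 0) (x : ι → ℝ) {ε : ℝ}
    (hε : 0 < ε) : ∃ t : ℕ, ∀ i, ∃ z : ℤ, |t * β i - x i - z| < ε := by
  by_contra! hfar
  set r := ‖1 + (𝐞 ε : ℂ)‖ / 2
  have hε_half : ε ≤ 1 / 2 := by
    obtain ⟨i, hi⟩ := hfar 0
    exact (hi _).trans (abs_sub_round _)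
  have hr1 : r < 1 := by
    have := norm_one_add_fourierChar_lt_two hε (by linarith)
    simp only [r]
    linarith
  have hF : ∀ t : ℕ, ‖∏ i, (1 + (𝐞 (t * β i - x i) : ℂ))‖ ≤ 2 ^ Fintype.card ι * r :=
    fun t => by
      obtain ⟨i₀, hi₀⟩ := hfar t
      refine norm_prod_le_two_pow_mul (fun i => norm_one_add_circle_le_two _) (i₀ := i₀) ?_
      rw [mul_div_cancel₀ _ two_ne_zero]
      exact norm_one_add_fourierChar_le_of_forall_le_abs_sub_int hε.le hi₀
  obtain ⟨p, hp⟩ := exists_add_one_pow_mul_pow_lt_one (Fintype.card ι) (by positivity) hr1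
  have hle := two_pow_pow_card_le_of_forall_norm_prod_le hβ x hF p
  rw [show ((p : ℝ) + 1) ^ Fintype.card ι * (2 ^ Fintype.card ι * r) ^ p =
    (2 ^ p) ^ Fintype.card ι * (((p : ℝ) + 1) ^ Fintype.card ι * r ^ p) by ring] at hle
  exact (mul_lt_of_lt_one_right (by positivity) hp).not_ge hle

lemma norm_le_sqrt_card_mul_of_forall_abs_le {ι : Type*} [Fintype ι] {v : EuclideanSpace ℝ ι}
    {δ : ℝ} (hδ : 0 ≤ δ) (h : ∀ i, |v i| ≤ δ) : ‖v‖ ≤ √(Fintype.card ι) * δ := by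
  rw [EuclideanSpace.norm_eq, ← sqrt_sq hδ, ← sqrt_mul (Nat.cast_nonneg _)]
  gcongr
  calc ∑ i, ‖v i‖ ^ 2 ≤ ∑ _i : ι, δ ^ 2 :=
        sum_le_sum fun i _ => pow_le_pow_left₀ (norm_nonneg _) (h i) 2
    _ = Fintype.card ι * δ ^ 2 := by rw [sum_const, card_univ, nsmul_eq_mul]

lemma eq_zero_of_sum_intCast_mul_two_mul_eq_intCast {ι : Type*} [Fintype ι] {α : ι → ℝ}
    (hind : ∀ (c₀ : ℚ) (c : ι → ℚ), (c₀ : ℝ) + ∑ i, (c i : ℝ) * α i = 0 → c₀ = 0 ∧ ∀ i, c i = 0)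
    (d : ι → ℤ) (hd : ∃ n : ℤ, ∑ i, d i * (2 * α i) = n) : d = 0 := by
  obtain ⟨n, hn⟩ := hd
  have hsum : ((-n : ℚ) : ℝ) + ∑ i, ((2 * d i : ℚ) : ℝ) * α i = 0 := by
    push_cast
    rw [← hn]
    simp only [mul_assoc, mul_left_comm (2 : ℝ), neg_add_cancel]
  funext i
  have := (hind (-n) (fun i => 2 * d i) hsum).2 i
  exact_mod_cast (mul_eq_zero.mp this).resolve_left two_ne_zero

theorem stmt_17_general {k : ℕ} (α : Fin k → ℝ)
    (hind : ∀ (c₀ : ℚ) (c : Fin k → ℚ),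
      (c₀ : ℝ) + ∑ i, (c i : ℝ) * α i = 0 → c₀ = 0 ∧ ∀ i, c i = 0)
    (a' : EuclideanSpace ℝ (Fin k)) (ha' : ∀ i, a' i = α i) :
    ∀ ε : ℝ, 0 < ε → ∃ (j : ℕ) (lam : EuclideanSpace ℝ (Fin k)),
      (∀ i, ∃ z : ℤ, lam i = z) ∧ ‖(2 * (j : ℝ) + 1) • a' + lam‖ < ε := by
  intro ε hε
  have hδ : 0 < ε / (√k + 1) := by positivity
  obtain ⟨j, hj⟩ := exists_nat_forall_abs_mul_sub_sub_int_lt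
    (eq_zero_of_sum_intCast_mul_two_mul_eq_intCast hind) (-α) hδ
  choose z hz using hj
  refine ⟨j, WithLp.toLp 2 fun i => -(z i : ℝ), fun i => ⟨-z i, by simp⟩, ?_⟩
  calc ‖(2 * (j : ℝ) + 1) • a' + WithLp.toLp 2 fun i => -(z i : ℝ)‖
      ≤ √(Fintype.card (Fin k)) * (ε / (√k + 1)) :=
        norm_le_sqrt_card_mul_of_forall_abs_le hδ.le fun i => by
          have happ : ((2 * (j : ℝ) + 1) • a' + WithLp.toLp 2 fun i => -(z i : ℝ)) i =
              j * (2 * α i) - (-α) i - z i := by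
            simp [ha']
            ring
          exact happ ▸ (hz i).le
    _ < ε := by
        rw [Fintype.card_fin, mul_div_assoc', div_lt_iff₀ (by positivity)]
        nlinarith

/-- If `α_1, …, α_k` are irrational reals such that `1, α_1, …, α_k` are
linearly independent over ℚ and `a' = (α_1, …, α_k) ∈ ℝ^k`, then for every `ε > 0` there are
`j ∈ ℕ` and `λ ∈ ℤ^k` with `‖(2j+1)·a' + λ‖ < ε`: some odd multiple of `a'` is ε-close to `0`
modulo ℤ^k. -/
theorem stmt_17 {k : ℕ} (α : Fin k → ℝ) (hirr : ∀ i, Irrational (α i))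
    (hind : ∀ (c₀ : ℚ) (c : Fin k → ℚ),
      (c₀ : ℝ) + ∑ i, (c i : ℝ) * α i = 0 → c₀ = 0 ∧ ∀ i, c i = 0)
    (a' : EuclideanSpace ℝ (Fin k)) (ha' : ∀ i, a' i = α i) :
    ∀ ε : ℝ, 0 < ε → ∃ (j : ℕ) (lam : EuclideanSpace ℝ (Fin k)),
      (∀ i, ∃ z : ℤ, lam i = z) ∧ ‖(2 * (j : ℝ) + 1) • a' + lam‖ < ε :=
  stmt_17_general α hind a' ha'
end

section
/- Let V be a linear subspace of ℝ^n that is spanned by a set of integer vectors (vectors in ℤ^n). If the orthogonal complement V^⊥ contains a non-zero vector all of whose coordinates are non-negative, then V^⊥ contains a non-zero integer vector (an element of ℤ^n) all of whose coordinates are non-negative. -/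
/-!
`V` is the real span of the rational subspace `U` spanned by the integer vectors, and `Vᗮ` is the
real span of the rational orthogonal complement of `U`: linear independence over `ℚ` persists over
`ℝ`, so the two spaces have the same dimension. Hence rational points are dense in `Vᗮ`, and also in
the subspace of `Vᗮ` cut out by the coordinates where `g` vanishes, which is of the same kind. A
rational point of it close enough to `g` is non-negative and non-zero, and clearing denominators
gives the integer vector.
-/

open Set Module Submodule

noncomputable section

lemma dotProductBilin_nondegenerate {K ι : Type*} [Field K] [LinearOrder K] [IsStrictOrderedRing K]
    [Fintype ι] : (dotProductBilin K K : LinearMap.BilinForm K (ι → K)).Nondegenerate :=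
  ⟨fun x hx => dotProduct_self_eq_zero.1 (hx x), fun y hy => dotProduct_self_eq_zero.1 (hy y)⟩

lemma mem_orthogonal_span_iff {𝕜 E : Type*} [RCLike 𝕜] [NormedAddCommGroup E] [InnerProductSpace 𝕜 E]
    {s : Set E} {v : E} : v ∈ (span 𝕜 s)ᗮ ↔ ∀ u ∈ s, inner 𝕜 v u = 0 := by
  rw [← span_singleton_le_iff_mem, ← isOrtho_iff_le, isOrtho_span]
  simp

lemma exists_nat_mul_eq_int {ι : Type*} [Fintype ι] (w : ι → ℚ) :
    ∃ N : ℕ, 0 < N ∧ ∀ i, ∃ z : ℤ, (N : ℚ) * w i = z := by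
  refine ⟨∏ i, (w i).den, Finset.prod_pos fun i _ => (w i).pos, fun i => ?_⟩
  obtain ⟨k, hk⟩ := Finset.dvd_prod_of_mem (fun i => (w i).den) (Finset.mem_univ i)
  refine ⟨k * (w i).num, ?_⟩
  rw [hk]
  push_cast
  rw [mul_comm ((w i).den : ℚ), mul_assoc, Rat.den_mul_eq_num]

section RationalSubspaces

variable {n : ℕ}

def ratVec (n : ℕ) : (Fin n → ℚ) →ₗ[ℚ] EuclideanSpace ℝ (Fin n) :=
  (WithLp.linearEquiv 2 ℚ (Fin n → ℝ)).symm.toLinearMap ∘ₗ (Algebra.linearMap ℚ ℝ).compLeft (Fin n)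

@[simp] lemma ratVec_apply (v : Fin n → ℚ) (i : Fin n) : ratVec n v i = v i := rfl

lemma ratVec_injective : Function.Injective (ratVec n) := fun _ _ h =>
  funext fun i => by simpa using congr($h i)

lemma inner_ratVec (u v : Fin n → ℚ) :
    inner ℝ (ratVec n u) (ratVec n v) = ((u ⬝ᵥ v : ℚ) : ℝ) := by
  simp [PiLp.inner_apply, dotProduct, mul_comm]

def realSpan (P : Submodule ℚ (Fin n → ℚ)) : Submodule ℝ (EuclideanSpace ℝ (Fin n)) :=
  span ℝ (ratVec n '' P)

lemma realSpan_span (s : Set (Fin n → ℚ)) : realSpan (span ℚ s) = span ℝ (ratVec n '' s) := by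
  rw [realSpan, ← map_coe, ← span_image, span_span_of_tower]

lemma realSpan_eq_span_basis {P : Submodule ℚ (Fin n → ℚ)} {ι : Type*} (b : Basis ι ℚ P) :
    realSpan P = span ℝ (range fun i => ratVec n (b i)) := by
  have hP : span ℚ (range fun i => (b i : Fin n → ℚ)) = P := by
    rw [show (range fun i => (b i : Fin n → ℚ)) = P.subtype '' range b from range_comp _ _,
      span_image, b.span_eq, Submodule.map_top, range_subtype]
  conv_lhs => rw [← hP]
  rw [realSpan_span, ← range_comp]
  rfl

lemma finrank_realSpan (P : Submodule ℚ (Fin n → ℚ)) : finrank ℝ (realSpan P) = finrank ℚ P := by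
  let b := finBasis ℚ P
  have hℚ : LinearIndependent ℚ fun i => (b i : Fin n → ℚ) :=
    b.linearIndependent.map' P.subtype P.ker_subtype
  have hℝ : LinearIndependent ℝ fun i => algebraMap ℚ ℝ ∘ (b i : Fin n → ℚ) :=
    linearIndependent_algebraMap_comp_iff.2 hℚ
  have hli : LinearIndependent ℝ fun i => ratVec n (b i) :=
    hℝ.map' (WithLp.linearEquiv 2 ℝ (Fin n → ℝ)).symm.toLinearMap (LinearEquiv.ker _)
  rw [realSpan_eq_span_basis b, finrank_span_eq_card hli, Fintype.card_fin]

def ratOrthogonal (U : Submodule ℚ (Fin n → ℚ)) : Submodule ℚ (Fin n → ℚ) :=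
  LinearMap.BilinForm.orthogonal (dotProductBilin ℚ ℚ) U

lemma mem_ratOrthogonal {U : Submodule ℚ (Fin n → ℚ)} {w : Fin n → ℚ} :
    w ∈ ratOrthogonal U ↔ ∀ u ∈ U, u ⬝ᵥ w = 0 :=
  Iff.rfl

lemma realSpan_ratOrthogonal (U : Submodule ℚ (Fin n → ℚ)) :
    realSpan (ratOrthogonal U) = (realSpan U)ᗮ := by
  refine eq_of_le_of_finrank_eq ?_ ?_
  · rw [← isOrtho_iff_le, realSpan, realSpan, isOrtho_span]
    rintro _ ⟨w, hw, rfl⟩ _ ⟨u, hu, rfl⟩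
    rw [inner_ratVec, dotProduct_comm, mem_ratOrthogonal.1 hw u hu, Rat.cast_zero]
  · have hU := (realSpan U).finrank_add_finrank_orthogonal
    have hle : finrank ℚ U ≤ n := by simpa using U.finrank_le
    rw [finrank_realSpan, finrank_euclideanSpace_fin] at hU
    rw [finrank_realSpan, ratOrthogonal, LinearMap.BilinForm.finrank_orthogonal dotProductBilin_nondegenerate,
      finrank_fin_fun]
    omega

lemma realSpan_subset_closure (P : Submodule ℚ (Fin n → ℚ)) :
    (realSpan P : Set (EuclideanSpace ℝ (Fin n))) ⊆ closure (ratVec n '' P) := by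
  intro x hx
  let b := finBasis ℚ P
  let combo : (Fin (finrank ℚ P) → ℝ) → EuclideanSpace ℝ (Fin n) :=
    fun r => ∑ j, r j • ratVec n (b j)
  obtain ⟨r, rfl⟩ := (mem_span_range_iff_exists_fun ℝ).1 (realSpan_eq_span_basis b ▸ hx)
  have hdense : DenseRange fun q : Fin (finrank ℚ P) → ℚ => fun j => (q j : ℝ) :=
    DenseRange.piMap fun _ => Rat.denseRange_cast
  have hr := mem_closure_image (f := combo) (by fun_prop) (hdense.closure_range ▸ mem_univ r)
  refine closure_mono ?_ hr
  rintro _ ⟨_, ⟨q, rfl⟩, rfl⟩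
  refine ⟨∑ j, q j • (b j : Fin n → ℚ), P.sum_mem fun j _ => P.smul_mem _ (b j).2, ?_⟩
  simp [combo, Rat.cast_smul_eq_qsmul]

lemma exists_mem_pos_of_mem_realSpan {P : Submodule ℚ (Fin n → ℚ)} {x : EuclideanSpace ℝ (Fin n)}
    (hx : x ∈ realSpan P) : ∃ w ∈ P, ∀ i, 0 < x i → 0 < w i := by
  have hopen : IsOpen {y : EuclideanSpace ℝ (Fin n) | ∀ i, 0 < x i → 0 < y i} := by
    simp only [ofPred_forall]
    refine isOpen_iInter_of_finite fun i => isOpen_iInter_of_finite fun _ => ?_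
    exact isOpen_lt continuous_const (by fun_prop)
  obtain ⟨_, hy, w, hw, rfl⟩ := mem_closure_iff.1 (realSpan_subset_closure P hx) _ hopen fun _ h => h
  exact ⟨w, hw, fun i hi => by simpa using hy i hi⟩

lemma exists_nonneg_mem_ratOrthogonal {U : Submodule ℚ (Fin n → ℚ)} {g : EuclideanSpace ℝ (Fin n)}
    (hgU : g ∈ (realSpan U)ᗮ) (hg0 : g ≠ 0) (hg : ∀ i, 0 ≤ g i) :
    ∃ w ∈ ratOrthogonal U, w ≠ 0 ∧ ∀ i, 0 ≤ w i := by
  -- the coordinate vectors where `g` vanishes force the approximation to vanish there as well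
  set U' := span ℚ (U ∪ range fun i : {i // g i = 0} => (Pi.single (i : Fin n) 1 : Fin n → ℚ))
  have hgU' : g ∈ (realSpan U')ᗮ := by
    rw [realSpan_span, mem_orthogonal_span_iff]
    rintro _ ⟨u, hu | ⟨⟨i, hi⟩, rfl⟩, rfl⟩
    · exact (mem_orthogonal' _ _).1 hgU _ (subset_span ⟨u, hu, rfl⟩)
    · simp [PiLp.inner_apply, Pi.single_apply, apply_ite, hi]
  obtain ⟨w, hw, hpos⟩ := exists_mem_pos_of_mem_realSpan (realSpan_ratOrthogonal U' ▸ hgU')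
  have hzero : ∀ i, g i = 0 → w i = 0 := fun i hi => by
    simpa using mem_ratOrthogonal.1 hw _ (subset_span (Or.inr ⟨⟨i, hi⟩, rfl⟩))
  obtain ⟨i₀, hi₀⟩ : ∃ i, 0 < g i := by
    by_contra! h
    exact hg0 (PiLp.ext fun i => le_antisymm (h i) (hg i))
  refine ⟨w, LinearMap.BilinForm.orthogonal_le (subset_union_left.trans subset_span) hw,
    fun h => (hpos i₀ hi₀).ne' (by simp [h]), fun i => ?_⟩
  rcases (hg i).eq_or_lt with h | h
  · exact (hzero i h.symm).ge
  · exact (hpos i h).le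

end RationalSubspaces

/-- If a linear subspace `V ⊆ ℝ^n` is spanned by a set of integer vectors
and its orthogonal complement contains a non-zero vector with all coordinates non-negative,
then `V^⊥` contains a non-zero integer vector with all coordinates non-negative. -/
theorem stmt_18 {n : ℕ} (V : Submodule ℝ (EuclideanSpace ℝ (Fin n)))
    (hV : ∃ S : Set (EuclideanSpace ℝ (Fin n)),
      (∀ x ∈ S, ∀ i, ∃ z : ℤ, x i = z) ∧ V = Submodule.span ℝ S)
    (hpos : ∃ g ∈ Vᗮ, g ≠ 0 ∧ ∀ i, 0 ≤ g i) :
    ∃ g' ∈ Vᗮ, g' ≠ 0 ∧ (∀ i, ∃ z : ℤ, g' i = z) ∧ ∀ i, 0 ≤ g' i := by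
  obtain ⟨S, hSint, rfl⟩ := hV
  obtain ⟨g, hgV, hg0, hg⟩ := hpos
  set U := span ℚ (ratVec n ⁻¹' S)
  have hVU : span ℝ S = realSpan U := by
    rw [realSpan_span, image_preimage_eq_of_subset]
    intro x hx
    choose z hz using hSint x hx
    exact ⟨fun i => z i, PiLp.ext fun i => by simp [hz]⟩
  rw [hVU] at hgV ⊢
  obtain ⟨w, hwU, hw0, hw⟩ := exists_nonneg_mem_ratOrthogonal hgV hg0 hg
  obtain ⟨N, hN, hNw⟩ := exists_nat_mul_eq_int w
  refine ⟨ratVec n ((N : ℚ) • w), ?_, ?_, fun i => ?_, fun i => ?_⟩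
  · rw [← realSpan_ratOrthogonal]
    exact subset_span ⟨_, (ratOrthogonal U).smul_mem _ hwU, rfl⟩
  · rw [Ne, ← map_zero (ratVec n), ratVec_injective.eq_iff]
    exact smul_ne_zero (by exact_mod_cast hN.ne') hw0
  · obtain ⟨z, hz⟩ := hNw i
    exact ⟨z, by rw [ratVec_apply, Pi.smul_apply, smul_eq_mul, hz, Rat.cast_intCast]⟩
  · exact (ratVec_apply _ i).symm ▸ Rat.cast_nonneg.2 (mul_nonneg (Nat.cast_nonneg N) (hw i))
end
end
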